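/- Let X_{l,m} take value n with probability h_{l,m}(n) / sum_{i=0}^{lm} h_{l,m}(i). Then for 0 ≤ n ≤ lm, P[X_{l,m} = n] = (1/((l+1)^m - 1)) · (l/(l+1)) · sum_{j=i}^{m} C(j,n)_{l+1}, where i is the smallest index in {1,...,m} with n ≤ i·l. -/

import Mathlib

/-- The polynomial coefficient `C(j,n)_{l+1}`: the coefficient of `x^n` in
`(1 + x + x^2 + ⋯ + x^l)^j`. -/
noncomputable def polyCoeff (l j n : ℕ) : ℕ :=
  ((∑ i ∈ Finset.range (l + 1), (Polynomial.X : Polynomial ℕ) ^ i) ^ j).coeff n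

/-- `cComp l n j` is the number of `j`-tuples of integers in `{0,…,l}` summing to `n`. -/
noncomputable def cComp (l n j : ℕ) : ℕ :=
  Nat.card {f : Fin j → ℕ // (∀ i, f i ≤ l) ∧ ∑ i, f i = n}

/-- `hRect l m n`: the number of compositions of `n` with at most `m` parts (at least one),
each part in `{0,…,l}`. -/
noncomputable def hRect (l m n : ℕ) : ℕ := ∑ j ∈ Finset.Icc 1 m, cComp l n j

/-! Expanding the product `(1 + x + ⋯ + x^l)^j` shows `cComp l n j = C(j,n)_{l+1}`. Since
`(1 + x + ⋯ + x^l)^j` has degree at most `jl`, the terms `j < i` of `h_{l,m}(n)` vanish, and the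
coefficients sum to its value `(l+1)^j` at `x = 1`; so the normalising constant is the geometric
sum `∑_{j=1}^m (l+1)^j = (l+1)((l+1)^m - 1)/l`. -/

open Finset Polynomial

lemma polyCoeff_eq_card_filter (l j n : ℕ) :
    polyCoeff l j n =
      #{f ∈ Fintype.piFinset fun _ : Fin j => range (l + 1) | ∑ i, f i = n} := by
  have hexpand : (∑ i ∈ range (l + 1), (X : ℕ[X]) ^ i) ^ j =
      ∑ f ∈ Fintype.piFinset (fun _ : Fin j => range (l + 1)), (X : ℕ[X]) ^ ∑ i, f i := by
    rw [← Fin.prod_const, prod_univ_sum]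
    simp only [prod_pow_eq_pow_sum]
  rw [polyCoeff, hexpand, finsetSum_coeff, card_filter]
  simp only [coeff_X_pow, eq_comm]

lemma cComp_eq_card_filter (l n j : ℕ) :
    cComp l n j =
      #{f ∈ Fintype.piFinset fun _ : Fin j => range (l + 1) | ∑ i, f i = n} := by
  rw [cComp, ← Nat.card_eq_finsetCard]
  exact Nat.card_congr <| Equiv.subtypeEquivRight fun f => by
    simp [Fintype.mem_piFinset]

lemma cComp_eq_polyCoeff (l n j : ℕ) : cComp l n j = polyCoeff l j n := by
  rw [cComp_eq_card_filter, polyCoeff_eq_card_filter]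

lemma natDegree_geomPoly_pow_le (l j : ℕ) :
    ((∑ i ∈ range (l + 1), (X : ℕ[X]) ^ i) ^ j).natDegree ≤ j * l := by
  refine natDegree_pow_le_of_le j (natDegree_sum_le_of_forall_le _ _ fun i hi => ?_)
  exact (natDegree_X_pow_le i).trans (Nat.lt_succ_iff.mp (mem_range.mp hi))

lemma polyCoeff_eq_zero_of_mul_lt {l j n : ℕ} (h : j * l < n) : polyCoeff l j n = 0 :=
  coeff_eq_zero_of_natDegree_lt ((natDegree_geomPoly_pow_le l j).trans_lt h)

lemma sum_range_polyCoeff {l j N : ℕ} (h : j * l ≤ N) :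
    ∑ n ∈ range (N + 1), polyCoeff l j n = (l + 1) ^ j := by
  have := eval_eq_sum_range' ((natDegree_geomPoly_pow_le l j).trans_lt (Nat.lt_succ_of_le h)) 1
  simpa [polyCoeff] using this.symm

lemma hRect_eq_sum_polyCoeff (l m n : ℕ) :
    hRect l m n = ∑ j ∈ Icc 1 m, polyCoeff l j n := by
  simp only [hRect, cComp_eq_polyCoeff]

lemma sum_range_hRect (l m : ℕ) :
    ∑ n ∈ range (l * m + 1), hRect l m n = ∑ j ∈ Icc 1 m, (l + 1) ^ j := by
  simp only [hRect_eq_sum_polyCoeff]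
  rw [sum_comm]
  refine sum_congr rfl fun j hj => sum_range_polyCoeff ?_
  rw [mul_comm l]
  exact Nat.mul_le_mul_right l (mem_Icc.mp hj).2

lemma sum_Icc_one_polyCoeff_eq_sum_Icc {l m n i : ℕ} (hi1 : 1 ≤ i)
    (hmin : ∀ j, 1 ≤ j → n ≤ j * l → i ≤ j) :
    ∑ j ∈ Icc 1 m, polyCoeff l j n = ∑ j ∈ Icc i m, polyCoeff l j n := by
  refine (sum_subset (Icc_subset_Icc hi1 le_rfl) fun j hj hji => ?_).symm
  rw [mem_Icc] at hj hji
  exact polyCoeff_eq_zero_of_mul_lt (not_le.mp fun hle => hji ⟨hmin j hj.1 hle, hj.2⟩)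

lemma sum_Icc_one_pow_mul_sub_one {R : Type*} [CommRing R] (x : R) (m : ℕ) :
    (∑ j ∈ Icc 1 m, x ^ j) * (x - 1) = x * (x ^ m - 1) := by
  rw [← Ico_add_one_right_eq_Icc, geom_sum_Ico_mul x (by omega)]
  ring

lemma sum_range_hRect_mul (l m : ℕ) :
    (∑ n ∈ range (l * m + 1), (hRect l m n : ℚ)) * l = (l + 1) * ((l + 1) ^ m - 1) := by
  have hgeom := sum_Icc_one_pow_mul_sub_one ((l : ℚ) + 1) m
  rw [add_sub_cancel_right] at hgeom
  rw [← hgeom]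
  exact_mod_cast congrArg (· * l) (sum_range_hRect l m)

theorem prob_X_eq_general (l m n i : ℕ) (hl : 1 ≤ l)
    (hi1 : 1 ≤ i)
    (hmin : ∀ j, 1 ≤ j → n ≤ j * l → i ≤ j) :
    (hRect l m n : ℚ) / ∑ i ∈ Finset.range (l * m + 1), (hRect l m i : ℚ) =
      (1 / ((l + 1) ^ m - 1)) * ((l : ℚ) / (l + 1)) *
        ∑ j ∈ Finset.Icc i m, (polyCoeff l j n : ℚ) := by
  have hl0 : (l : ℚ) ≠ 0 := Nat.cast_ne_zero.mpr (by omega)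
  rw [eq_div_of_mul_eq hl0 (sum_range_hRect_mul l m), hRect_eq_sum_polyCoeff,
    sum_Icc_one_polyCoeff_eq_sum_Icc hi1 hmin]
  push_cast
  field_simp

/-- `P[X_{l,m} = n] = (1/((l+1)^m - 1)) · (l/(l+1)) · ∑_{j=i}^m C(j,n)_{l+1}`, where
`X_{l,m} = n` with probability `hRect l m n / ∑_i hRect l m i` and `i` is the smallest
index in `{1,…,m}` with `n ≤ i·l`. -/
theorem prob_X_eq (l m n i : ℕ) (hl : 1 ≤ l) (hm : 1 ≤ m) (hn : n ≤ l * m)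
    (hi1 : 1 ≤ i) (him : i ≤ m) (hile : n ≤ i * l)
    (hmin : ∀ j, 1 ≤ j → n ≤ j * l → i ≤ j) :
    (hRect l m n : ℚ) / ∑ i ∈ Finset.range (l * m + 1), (hRect l m i : ℚ) =
      (1 / ((l + 1) ^ m - 1)) * ((l : ℚ) / (l + 1)) *
        ∑ j ∈ Finset.Icc i m, (polyCoeff l j n : ℚ) :=
  prob_X_eq_general l m n i hl hi1 hmin
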